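/- arXiv:1507.00293 — 2 statements merged into one kernel-verified Lean document; each statement's English description precedes it below -/
import Mathlib

section
/- Let U ⊆ ℂ be open and φ₁, φ₂, φ₃ : ℂ → ℂ be holomorphic on U with φ₁² + φ₂² + φ₃² = 0 on U and λ := (|φ₁|² + |φ₂|² + |φ₃|²)/2 > 0 on U. Define real-valued functions α := −Im(φ₂·conj(φ₃))/λ, β := −Im(φ₃·conj(φ₁))/λ, γ := −Im(φ₁·conj(φ₂))/λ on U. Then on U the following relations hold for the Wirtinger derivatives: −i·∂̄α = β·∂̄γ − γ·∂̄β, −i·∂̄β = γ·∂̄α − α·∂̄γ, and −i·∂̄γ = α·∂̄β − β·∂̄α. -/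
open Complex ComplexConjugate

/-- The Wirtinger derivative with respect to `z̄` of a map `ℂ → ℂ`,
viewed as a map between real vector spaces. -/
noncomputable def dbar (h : ℂ → ℂ) (z : ℂ) : ℂ :=
  (1 / 2) * (fderiv ℝ h z 1 + Complex.I • fderiv ℝ h z Complex.I)

open Matrix

/-!
Write `φ = (φ₁, φ₂, φ₃)`, so that `λ = φ ⬝ φ̄ / 2` and the Gauss map is `n = (i / 2λ) φ × φ̄`.
Since `φ` is holomorphic, `∂̄φ = 0` and `∂̄φ̄ = conj φ'`, so with `ψ := conj φ'` the quotient rule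
gives `∂̄n = (i / 2λ²) (λ φ × ψ - (φ ⬝ ψ / 2) φ × φ̄)`. The three relations say `-i ∂̄n = n × ∂̄n`.
As `(φ × φ̄) × (φ × φ̄) = 0`, this reduces to `(φ ⬝ φ̄) φ × ψ - (φ ⬝ ψ) φ × φ̄ = (φ × ψ) × (φ × φ̄)`,
which is the expansion of the double cross product once `φ` is isotropic, `φ ⬝ φ = 0`.
-/

section Wirtinger

variable {f g : ℂ → ℂ} {z : ℂ}

theorem dbar_add (hf : DifferentiableAt ℝ f z) (hg : DifferentiableAt ℝ g z) :
    dbar (fun w => f w + g w) z = dbar f z + dbar g z := by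
  simp only [dbar, fderiv_fun_add hf hg, _root_.add_apply, smul_eq_mul]
  ring

theorem dbar_sub (hf : DifferentiableAt ℝ f z) (hg : DifferentiableAt ℝ g z) :
    dbar (fun w => f w - g w) z = dbar f z - dbar g z := by
  simp only [dbar, fderiv_fun_sub hf hg, _root_.sub_apply, smul_eq_mul]
  ring

theorem dbar_mul (hf : DifferentiableAt ℝ f z) (hg : DifferentiableAt ℝ g z) :
    dbar (fun w => f w * g w) z = f z * dbar g z + g z * dbar f z := by
  simp only [dbar, fderiv_fun_mul hf hg, _root_.add_apply, _root_.smul_apply, smul_eq_mul]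
  ring

theorem dbar_const_mul (c : ℂ) (hf : DifferentiableAt ℝ f z) :
    dbar (fun w => c * f w) z = c * dbar f z := by
  simp only [dbar, fderiv_const_mul hf c, _root_.smul_apply, smul_eq_mul]
  ring

theorem dbar_div_const (hf : DifferentiableAt ℝ f z) (c : ℂ) :
    dbar (fun w => f w / c) z = dbar f z / c := by
  simp only [div_eq_mul_inv, dbar, fderiv_mul_const hf c⁻¹, _root_.smul_apply, smul_eq_mul]
  ring

theorem dbar_inv (hf : DifferentiableAt ℝ f z) (hf₀ : f z ≠ 0) :
    dbar (fun w => (f w)⁻¹) z = -dbar f z / f z ^ 2 := by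
  have h := ((hasFDerivAt_inv' (𝕜 := ℝ) hf₀).comp z hf.hasFDerivAt).fderiv
  simp only [Function.comp_def] at h
  simp only [dbar, h, ContinuousLinearMap.comp_apply, _root_.neg_apply,
    ContinuousLinearMap.mulLeftRight_apply, smul_eq_mul]
  field_simp
  ring

theorem dbar_div (hf : DifferentiableAt ℝ f z) (hg : DifferentiableAt ℝ g z) (hg₀ : g z ≠ 0) :
    dbar (fun w => f w / g w) z = (g z * dbar f z - f z * dbar g z) / g z ^ 2 := by
  simp only [div_eq_mul_inv, dbar_mul hf (hg.fun_inv hg₀), dbar_inv hg hg₀]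
  field_simp
  ring

theorem fderiv_real_apply_of_differentiableAt (hf : DifferentiableAt ℂ f z) (v : ℂ) :
    fderiv ℝ f z v = deriv f z * v := by
  rw [hf.hasDerivAt.complexToReal_fderiv.fderiv]
  simp

theorem dbar_eq_zero_of_differentiableAt (hf : DifferentiableAt ℂ f z) : dbar f z = 0 := by
  simp only [dbar, fderiv_real_apply_of_differentiableAt hf, smul_eq_mul]
  linear_combination (deriv f z / 2) * I_sq

theorem dbar_conj (hf : DifferentiableAt ℂ f z) :
    dbar (fun w => conj (f w)) z = conj (deriv f z) := by
  have h : fderiv ℝ (fun w => conj (f w)) z = conjCLE.toContinuousLinearMap ∘L fderiv ℝ f z :=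
    conjCLE.comp_fderiv
  simp only [dbar, h, ContinuousLinearMap.comp_apply, fderiv_real_apply_of_differentiableAt hf,
    ContinuousLinearEquiv.coe_coe, conjCLE_apply, map_mul, map_one, conj_I, smul_eq_mul]
  linear_combination (-conj (deriv f z) / 2) * I_sq

theorem DifferentiableAt.real_conj (hf : DifferentiableAt ℂ f z) :
    DifferentiableAt ℝ (fun w => conj (f w)) z :=
  (hf.restrictScalars ℝ).star

theorem DifferentiableAt.real_mul_conj (hf : DifferentiableAt ℂ f z)
    (hg : DifferentiableAt ℂ g z) : DifferentiableAt ℝ (fun w => f w * conj (g w)) z :=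
  (hf.restrictScalars ℝ).mul hg.real_conj

theorem dbar_mul_conj (hf : DifferentiableAt ℂ f z) (hg : DifferentiableAt ℂ g z) :
    dbar (fun w => f w * conj (g w)) z = f z * conj (deriv g z) := by
  rw [dbar_mul (hf.restrictScalars ℝ) hg.real_conj, dbar_conj hg,
    dbar_eq_zero_of_differentiableAt hf]
  ring

end Wirtinger

theorem cross_cross_cross_eq_smul_sub_smul_add_smul {R : Type*} [CommRing R]
    (u v w : Fin 3 → R) :
    (u ⨯₃ w) ⨯₃ (u ⨯₃ v) =
      (u ⬝ᵥ v) • (u ⨯₃ w) - (u ⬝ᵥ w) • (u ⨯₃ v) + (u ⬝ᵥ u) • (w ⨯₃ v) := by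
  ext i
  fin_cases i <;>
  · simp only [cross_apply, vec3_dotProduct, Fin.zero_eta, Fin.mk_one, Fin.reduceFinMk,
      Fin.isValue, cons_val_zero, cons_val_one, cons_val, Pi.add_apply, Pi.sub_apply,
      Pi.smul_apply, smul_eq_mul]
    ring

theorem neg_I_smul_eq_cross {u v w n d : Fin 3 → ℂ} {l : ℂ} (hl : l ≠ 0)
    (huu : u ⬝ᵥ u = 0) (huv : u ⬝ᵥ v = 2 * l)
    (hn : n = (I / (2 * l)) • (u ⨯₃ v))
    (hd : d = (I / (2 * l ^ 2)) • (l • (u ⨯₃ w) - ((u ⬝ᵥ w) / 2) • (u ⨯₃ v))) :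
    -I • d = n ⨯₃ d := by
  have key := cross_cross_cross_eq_smul_sub_smul_add_smul u v w
  rw [huu, huv, zero_smul, add_zero] at key
  subst hn hd
  simp only [map_smul, map_sub, LinearMap.smul_apply, cross_self, smul_zero, sub_zero]
  rw [← cross_anticomm (u ⨯₃ w), key]
  match_scalars <;> field_simp

section SumMulConj

variable {φ₁ φ₂ φ₃ : ℂ → ℂ} {z : ℂ}

theorem differentiableAt_sum_mul_conj_div_two (h₁ : DifferentiableAt ℂ φ₁ z)
    (h₂ : DifferentiableAt ℂ φ₂ z) (h₃ : DifferentiableAt ℂ φ₃ z) :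
    DifferentiableAt ℝ
      (fun w => (φ₁ w * conj (φ₁ w) + φ₂ w * conj (φ₂ w) + φ₃ w * conj (φ₃ w)) / 2) z := by
  simpa only [div_eq_mul_inv] using (((h₁.real_mul_conj h₁).fun_add
    (h₂.real_mul_conj h₂)).fun_add (h₃.real_mul_conj h₃)).mul_const (2⁻¹ : ℂ)

theorem dbar_sum_mul_conj_div_two (h₁ : DifferentiableAt ℂ φ₁ z)
    (h₂ : DifferentiableAt ℂ φ₂ z) (h₃ : DifferentiableAt ℂ φ₃ z) :
    dbar (fun w => (φ₁ w * conj (φ₁ w) + φ₂ w * conj (φ₂ w) + φ₃ w * conj (φ₃ w)) / 2) z =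
      (φ₁ z * conj (deriv φ₁ z) + φ₂ z * conj (deriv φ₂ z) + φ₃ z * conj (deriv φ₃ z)) / 2 := by
  have h₁₂ := (h₁.real_mul_conj h₁).fun_add (h₂.real_mul_conj h₂)
  rw [dbar_div_const (h₁₂.fun_add (h₃.real_mul_conj h₃)), dbar_add h₁₂ (h₃.real_mul_conj h₃),
    dbar_add (h₁.real_mul_conj h₁) (h₂.real_mul_conj h₂), dbar_mul_conj h₁ h₁,
    dbar_mul_conj h₂ h₂, dbar_mul_conj h₃ h₃]

end SumMulConj

section GaussMap

variable {φ₁ φ₂ φ₃ L : ℂ → ℂ} {z : ℂ}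

noncomputable def gaussComponent (f g L : ℂ → ℂ) (w : ℂ) : ℂ :=
  I * (f w * conj (g w) - g w * conj (f w)) / (2 * L w)

theorem dbar_gaussComponent {f g : ℂ → ℂ} (hf : DifferentiableAt ℂ f z)
    (hg : DifferentiableAt ℂ g z) (hL : DifferentiableAt ℝ L z) (hL₀ : L z ≠ 0) :
    dbar (gaussComponent f g L) z =
      I / (2 * L z ^ 2) * (L z * (f z * conj (deriv g z) - g z * conj (deriv f z)) -
        dbar L z * (f z * conj (g z) - g z * conj (f z))) := by
  have hC := (hf.real_mul_conj hg).fun_sub (hg.real_mul_conj hf)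
  unfold gaussComponent
  rw [dbar_div (hC.const_mul I) (hL.const_mul 2) (mul_ne_zero two_ne_zero hL₀),
    dbar_const_mul _ hC, dbar_const_mul _ hL, dbar_sub (hf.real_mul_conj hg) (hg.real_mul_conj hf),
    dbar_mul_conj hf hg, dbar_mul_conj hg hf]
  field_simp

theorem neg_I_smul_dbar_gaussMap_eq_cross (h₁ : DifferentiableAt ℂ φ₁ z)
    (h₂ : DifferentiableAt ℂ φ₂ z) (h₃ : DifferentiableAt ℂ φ₃ z)
    (hsum : φ₁ z ^ 2 + φ₂ z ^ 2 + φ₃ z ^ 2 = 0)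
    (hL : L = fun w => (φ₁ w * conj (φ₁ w) + φ₂ w * conj (φ₂ w) + φ₃ w * conj (φ₃ w)) / 2)
    (hL₀ : L z ≠ 0) :
    -I • ![dbar (gaussComponent φ₂ φ₃ L) z, dbar (gaussComponent φ₃ φ₁ L) z,
        dbar (gaussComponent φ₁ φ₂ L) z] =
      ![gaussComponent φ₂ φ₃ L z, gaussComponent φ₃ φ₁ L z, gaussComponent φ₁ φ₂ L z] ⨯₃
        ![dbar (gaussComponent φ₂ φ₃ L) z, dbar (gaussComponent φ₃ φ₁ L) z,
          dbar (gaussComponent φ₁ φ₂ L) z] := by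
  have hLd : DifferentiableAt ℝ L z := hL ▸ differentiableAt_sum_mul_conj_div_two h₁ h₂ h₃
  have hdL := hL ▸ dbar_sum_mul_conj_div_two h₁ h₂ h₃
  refine neg_I_smul_eq_cross (u := ![φ₁ z, φ₂ z, φ₃ z])
    (v := ![conj (φ₁ z), conj (φ₂ z), conj (φ₃ z)])
    (w := ![conj (deriv φ₁ z), conj (deriv φ₂ z), conj (deriv φ₃ z)]) hL₀ ?_ ?_ ?_ ?_
  · simp only [vec3_dotProduct, Fin.isValue, cons_val_zero, cons_val_one, cons_val]
    linear_combination hsum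
  · simp only [hL, vec3_dotProduct, Fin.isValue, cons_val_zero, cons_val_one, cons_val]
    ring
  · ext i
    fin_cases i <;>
    · simp only [gaussComponent, cross_apply, Fin.zero_eta, Fin.mk_one, Fin.reduceFinMk,
        Fin.isValue, cons_val_zero, cons_val_one, cons_val, Pi.smul_apply, smul_eq_mul]
      ring
  · rw [dbar_gaussComponent h₂ h₃ hLd hL₀, dbar_gaussComponent h₃ h₁ hLd hL₀,
      dbar_gaussComponent h₁ h₂ hLd hL₀, hdL]
    ext i
    fin_cases i <;>
    simp only [cross_apply, vec3_dotProduct, Fin.zero_eta, Fin.mk_one, Fin.reduceFinMk,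
      Fin.isValue, cons_val_zero, cons_val_one, cons_val, Pi.smul_apply, Pi.sub_apply,
      smul_eq_mul]

end GaussMap

theorem ofReal_half_sum_sq_norm (a b c : ℂ) :
    (((‖a‖ ^ 2 + ‖b‖ ^ 2 + ‖c‖ ^ 2) / 2 : ℝ) : ℂ) = (a * conj a + b * conj b + c * conj c) / 2 := by
  simp only [mul_conj, normSq_eq_norm_sq]
  push_cast
  rfl

theorem ofReal_neg_im_mul_conj_div (x y : ℂ) (t : ℝ) :
    ((-((x * conj y).im / t) : ℝ) : ℂ) = I * (x * conj y - y * conj x) / (2 * t) := by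
  have hy : y * conj x = conj (x * conj y) := by simp [mul_comm]
  rw [hy, sub_conj, mul_comm 2 (t : ℂ), ← div_div]
  push_cast
  linear_combination (-(x * conj y).im / t : ℂ) * I_sq

theorem gauss_map_dbar_relations
    (U : Set ℂ) (hU : IsOpen U) (φ₁ φ₂ φ₃ : ℂ → ℂ)
    (hφ₁ : DifferentiableOn ℂ φ₁ U) (hφ₂ : DifferentiableOn ℂ φ₂ U)
    (hφ₃ : DifferentiableOn ℂ φ₃ U)
    (hsum : ∀ z ∈ U, φ₁ z ^ 2 + φ₂ z ^ 2 + φ₃ z ^ 2 = 0)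
    (lam : ℂ → ℝ)
    (hlam : lam = fun z =>
      (‖φ₁ z‖ ^ 2 + ‖φ₂ z‖ ^ 2 + ‖φ₃ z‖ ^ 2) / 2)
    (hpos : ∀ z ∈ U, 0 < lam z)
    (α β γ : ℂ → ℂ)
    (hα : α = fun z => (↑(-((φ₂ z * conj (φ₃ z)).im / lam z)) : ℂ))
    (hβ : β = fun z => (↑(-((φ₃ z * conj (φ₁ z)).im / lam z)) : ℂ))
    (hγ : γ = fun z => (↑(-((φ₁ z * conj (φ₂ z)).im / lam z)) : ℂ)) :
    ∀ z ∈ U,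
      -Complex.I * dbar α z = β z * dbar γ z - γ z * dbar β z ∧
      -Complex.I * dbar β z = γ z * dbar α z - α z * dbar γ z ∧
      -Complex.I * dbar γ z = α z * dbar β z - β z * dbar α z := by
  intro z hz
  set L : ℂ → ℂ := fun w => (lam w : ℂ)
  have hL : L = fun w => (φ₁ w * conj (φ₁ w) + φ₂ w * conj (φ₂ w) + φ₃ w * conj (φ₃ w)) / 2 := by
    simp only [L, hlam, ofReal_half_sum_sq_norm]
  have hαβγ : α = gaussComponent φ₂ φ₃ L ∧ β = gaussComponent φ₃ φ₁ L ∧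
      γ = gaussComponent φ₁ φ₂ L := by
    simp only [hα, hβ, hγ, ofReal_neg_im_mul_conj_div]
    exact ⟨rfl, rfl, rfl⟩
  obtain ⟨rfl, rfl, rfl⟩ := hαβγ
  have key := neg_I_smul_dbar_gaussMap_eq_cross (hφ₁.differentiableAt (hU.mem_nhds hz))
    (hφ₂.differentiableAt (hU.mem_nhds hz)) (hφ₃.differentiableAt (hU.mem_nhds hz))
    (hsum z hz) hL (ofReal_ne_zero.mpr (hpos z hz).ne')
  simpa only [neg_smul, smul_cons, smul_eq_mul, smul_empty, neg_cons, neg_empty, neg_mul,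
    cross_apply, Fin.isValue, cons_val_zero, cons_val_one, cons_val, vecCons_inj, and_true]
    using key
end

section
/- Let U ⊆ ℂ be open and φ₁, φ₂, φ₃ : ℂ → ℂ be holomorphic on U with φ₁² + φ₂² + φ₃² = 0 on U and λ := (|φ₁|² + |φ₂|² + |φ₃|²)/2 > 0 on U. Define real-valued functions α := −Im(φ₂·conj(φ₃))/λ, β := −Im(φ₃·conj(φ₁))/λ, γ := −Im(φ₁·conj(φ₂))/λ on U. Then at every z ∈ U with α(z) ≠ −1, the ℂ-valued function ζ := (β + iγ)/(1 + α) has vanishing Wirtinger derivative with respect to z̄: ∂̄ζ(z) = 0. In other words, the stereographic coordinate of the Gauss map (α, β, γ) : U → S² is a holomorphic function of z. -/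
/-!
With `p = φ₂ + iφ₃` and `q = φ₂ - iφ₃`, the null condition reads `p q = -φ₁²`, and the real
numerator and denominator of `ζ` become `λ (β + iγ) = (conj φ₁ · p - φ₁ · conj q) / 2` and
`λ (1 + α) = (|φ₁|² + |q|²) / 2`. Hence `ζ = p / φ₁` where `φ₁ ≠ 0` and `ζ = -φ₁ / q` where
`q ≠ 0`; the condition `α ≠ -1` says exactly that one of the two holds, so near every such point
`ζ` agrees with a quotient of holomorphic functions and its `∂̄`-derivative vanishes.
-/

open Complex ComplexConjugate

open Filter Topology

theorem Filter.EventuallyEq.dbar_eq {f g : ℂ → ℂ} {z : ℂ} (h : f =ᶠ[𝓝 z] g) :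
    dbar f z = dbar g z := by
  rw [dbar, dbar, h.fderiv_eq]

theorem DifferentiableAt.dbar_eq_zero {g : ℂ → ℂ} {z : ℂ} (hg : DifferentiableAt ℂ g z) :
    dbar g z = 0 := by
  have hI : fderiv ℂ g z I = I * fderiv ℂ g z 1 := by
    rw [← smul_eq_mul, ← map_smul, smul_eq_mul, mul_one]
  rw [dbar, hg.fderiv_restrictScalars ℝ, ContinuousLinearMap.coe_restrictScalars', hI,
    smul_eq_mul]
  linear_combination (fderiv ℂ g z 1 / 2) * I_mul_I

section GaussMap

variable (a b c : ℂ)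

/-- At `(a, b, c) = (φ₁, φ₂, φ₃)(w)`, `gaussNum = λ (β + iγ)` and `gaussDen = λ (1 + α)`. -/
noncomputable def gaussNum : ℂ :=
  ((-(c * conj a).im : ℝ) : ℂ) + I * ((-(a * conj b).im : ℝ) : ℂ)

noncomputable def gaussDen : ℝ :=
  (‖a‖ ^ 2 + ‖b‖ ^ 2 + ‖c‖ ^ 2) / 2 - (b * conj c).im

theorem neg_im_div_add_I_mul_eq_gaussNum_div (r : ℝ) :
    ((-((c * conj a).im / r) : ℝ) : ℂ) + I * ((-((a * conj b).im / r) : ℝ) : ℂ)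
      = gaussNum a b c / r := by
  simp only [gaussNum]
  push_cast
  ring

theorem one_add_neg_im_div_eq_gaussDen_div {r : ℝ}
    (hr : r = (‖a‖ ^ 2 + ‖b‖ ^ 2 + ‖c‖ ^ 2) / 2) (hr0 : r ≠ 0) :
    1 + ((-((b * conj c).im / r) : ℝ) : ℂ) = gaussDen a b c / r := by
  rw [gaussDen, ← hr]
  push_cast
  rw [sub_div, div_self (ofReal_ne_zero.2 hr0)]
  ring

theorem two_mul_gaussNum :
    2 * gaussNum a b c = conj a * (b + I * c) - a * conj (b - I * c) := by
  rw [gaussNum, ofReal_neg, ofReal_neg, im_eq_sub_conj, im_eq_sub_conj]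
  simp only [map_mul, map_sub, conj_conj, conj_I]
  field_simp
  linear_combination (conj c * a - c * conj a) * I_sq

theorem gaussDen_eq : gaussDen a b c = (‖a‖ ^ 2 + ‖b - I * c‖ ^ 2) / 2 := by
  simp only [gaussDen, ← normSq_eq_norm_sq, normSq_apply, mul_im, conj_re, conj_im, sub_re, sub_im,
    mul_re, I_re, I_im]
  ring

theorem two_mul_ofReal_gaussDen :
    2 * (gaussDen a b c : ℂ) = a * conj a + (b - I * c) * conj (b - I * c) := by
  rw [gaussDen_eq, mul_conj', mul_conj']
  push_cast
  ring

theorem gaussDen_eq_zero_iff : gaussDen a b c = 0 ↔ a = 0 ∧ b - I * c = 0 := by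
  rw [gaussDen_eq]
  constructor
  · intro h
    constructor <;> rw [← norm_eq_zero] <;> nlinarith [sq_nonneg ‖a‖, sq_nonneg ‖b - I * c‖]
  · rintro ⟨ha, hq⟩
    simp [ha, hq]

variable {a b c} (h : a ^ 2 + b ^ 2 + c ^ 2 = 0)
include h

theorem gaussNum_mul_left : gaussNum a b c * a = (b + I * c) * gaussDen a b c := by
  linear_combination (a / 2) * two_mul_gaussNum a b c
    - ((b + I * c) / 2) * two_mul_ofReal_gaussDen a b c
    - (conj (b - I * c) / 2) * h + (conj (b - I * c) * c ^ 2 / 2) * I_sq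

theorem gaussNum_mul_sub : gaussNum a b c * (b - I * c) = -a * gaussDen a b c := by
  linear_combination ((b - I * c) / 2) * two_mul_gaussNum a b c
    + (a / 2) * two_mul_ofReal_gaussDen a b c
    + (conj a / 2) * h - (conj a * c ^ 2 / 2) * I_sq

theorem gaussNum_div_gaussDen_of_ne_zero (ha : a ≠ 0) :
    gaussNum a b c / gaussDen a b c = (b + I * c) / a := by
  have hden : (gaussDen a b c : ℂ) ≠ 0 :=
    ofReal_ne_zero.2 fun h0 => ha ((gaussDen_eq_zero_iff a b c).1 h0).1
  rw [div_eq_div_iff hden ha, gaussNum_mul_left h]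

theorem gaussNum_div_gaussDen_of_sub_ne_zero (hq : b - I * c ≠ 0) :
    gaussNum a b c / gaussDen a b c = -a / (b - I * c) := by
  have hden : (gaussDen a b c : ℂ) ≠ 0 :=
    ofReal_ne_zero.2 fun h0 => hq ((gaussDen_eq_zero_iff a b c).1 h0).2
  rw [div_eq_div_iff hden hq, gaussNum_mul_sub h]

end GaussMap

theorem gauss_map_stereographic_holomorphic
    (U : Set ℂ) (hU : IsOpen U) (φ₁ φ₂ φ₃ : ℂ → ℂ)
    (hφ₁ : DifferentiableOn ℂ φ₁ U) (hφ₂ : DifferentiableOn ℂ φ₂ U)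
    (hφ₃ : DifferentiableOn ℂ φ₃ U)
    (hsum : ∀ z ∈ U, φ₁ z ^ 2 + φ₂ z ^ 2 + φ₃ z ^ 2 = 0)
    (lam : ℂ → ℝ)
    (hlam : lam = fun z =>
      (‖φ₁ z‖ ^ 2 + ‖φ₂ z‖ ^ 2 + ‖φ₃ z‖ ^ 2) / 2)
    (hpos : ∀ z ∈ U, 0 < lam z)
    (α β γ : ℂ → ℂ)
    (hα : α = fun z => (↑(-((φ₂ z * conj (φ₃ z)).im / lam z)) : ℂ))
    (hβ : β = fun z => (↑(-((φ₃ z * conj (φ₁ z)).im / lam z)) : ℂ))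
    (hγ : γ = fun z => (↑(-((φ₁ z * conj (φ₂ z)).im / lam z)) : ℂ))
    (ζ : ℂ → ℂ) (hζ : ζ = fun w => (β w + Complex.I * γ w) / (1 + α w)) :
    ∀ z ∈ U, α z ≠ -1 → dbar ζ z = 0 := by
  intro z hz hαz
  have one_add_α : ∀ w ∈ U, 1 + α w = gaussDen (φ₁ w) (φ₂ w) (φ₃ w) / lam w := fun w hw => by
    rw [hα]
    exact one_add_neg_im_div_eq_gaussDen_div _ _ _ (congrFun hlam w) (hpos w hw).ne'
  have hζ_eq : ∀ w ∈ U, ζ w = gaussNum (φ₁ w) (φ₂ w) (φ₃ w) / gaussDen (φ₁ w) (φ₂ w) (φ₃ w) :=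
    fun w hw => by
      simp only [hζ, one_add_α w hw, hβ, hγ]
      rw [neg_im_div_add_I_mul_eq_gaussNum_div,
        div_div_div_cancel_right₀ (ofReal_ne_zero.2 (hpos w hw).ne')]
  have hden : gaussDen (φ₁ z) (φ₂ z) (φ₃ z) ≠ 0 := fun h0 =>
    hαz (eq_neg_of_add_eq_zero_right (by rw [one_add_α z hz, h0, ofReal_zero, zero_div]))
  have hd : ∀ {f : ℂ → ℂ}, DifferentiableOn ℂ f U → DifferentiableAt ℂ f z :=
    fun hf => hf.differentiableAt (hU.mem_nhds hz)
  rcases not_and_or.1 (mt (gaussDen_eq_zero_iff _ _ _).2 hden) with ha | hq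
  · have hchart : ζ =ᶠ[𝓝 z] fun w => (φ₂ w + I * φ₃ w) / φ₁ w := by
      filter_upwards [hU.eventually_mem hz, (hd hφ₁).continuousAt.eventually_ne ha] with w hw hw₁
      rw [hζ_eq w hw, gaussNum_div_gaussDen_of_ne_zero (hsum w hw) hw₁]
    rw [hchart.dbar_eq]
    exact (((hd hφ₂).add ((hd hφ₃).const_mul I)).div (hd hφ₁) ha).dbar_eq_zero
  · have hd_q := (hd hφ₂).sub ((hd hφ₃).const_mul I)
    have hchart : ζ =ᶠ[𝓝 z] fun w => -φ₁ w / (φ₂ w - I * φ₃ w) := by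
      filter_upwards [hU.eventually_mem hz, hd_q.continuousAt.eventually_ne hq] with w hw hw_q
      rw [hζ_eq w hw, gaussNum_div_gaussDen_of_sub_ne_zero (hsum w hw) hw_q]
    rw [hchart.dbar_eq]
    exact ((hd hφ₁).neg.div hd_q hq).dbar_eq_zero
end
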